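/- Let X be a real Banach space and let F : X → [0,+∞] be a lower semicontinuous convex function. Let (E,μ) be a measure space with μ ≥ 0 and μ(E) = 1, and let u : E → X be Bochner integrable. Then F(∫_E u(s) dμ(s)) ≤ ∫_E F(u(s)) dμ(s), where the right-hand side is the Lebesgue (lower) integral of the [0,+∞]-valued function s ↦ F(u(s)). -/

import Mathlib

open MeasureTheory Filter Topology
open scoped ENNReal

noncomputable section

/-- The underlying space of the first Heisenberg group: `ℝ³`. -/
abbrev H3 : Type := ℝ × ℝ × ℝ

/-- Heisenberg group law. -/
def Hmul (p q : H3) : H3 :=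
  (p.1 + q.1, p.2.1 + q.2.1,
    p.2.2 + q.2.2 + (p.1 * q.2.1 - p.2.1 * q.1) / 2)

/-- Heisenberg group inverse. -/
def Hinv (p : H3) : H3 := (-p.1, -p.2.1, -p.2.2)

/-- Anisotropic dilations `δ_λ`. -/
def Hdil (l : ℝ) (p : H3) : H3 := (l * p.1, l * p.2.1, l ^ 2 * p.2.2)

/-- The Korányi homogeneous norm. -/
def Knorm (p : H3) : ℝ :=
  ((p.1 ^ 2 + p.2.1 ^ 2) ^ 2 + 16 * p.2.2 ^ 2) ^ ((1 : ℝ) / 4)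

/-- Left-invariant Korányi distance `d(p,q) = ‖q⁻¹·p‖_ℍ`. -/
def dH (p q : H3) : ℝ := Knorm (Hmul (Hinv q) p)

/-- Right-invariant distance `d^R(p,q) = ‖p·q⁻¹‖_ℍ`. -/
def dR (p q : H3) : ℝ := Knorm (Hmul p (Hinv q))

/-- Open ball for the left-invariant distance. -/
def Hball (p : H3) (r : ℝ) : Set H3 := {q | dH q p < r}

/-- Open ball for the right-invariant distance. -/
def HballR (p : H3) (r : ℝ) : Set H3 := {q | dR q p < r}

/-- `dist^R` between two sets (valued in `[0,∞]`, with `inf ∅ = ∞`). -/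
def distSetR (A S : Set H3) : ℝ≥0∞ := ⨅ a ∈ A, ⨅ s ∈ S, ENNReal.ofReal (dR a s)

/-- `Ω_ε^R = {x : dist^R(x, Ωᶜ) > ε}`. -/
def innerR (Ω : Set H3) (ε : ℝ) : Set H3 :=
  {x | ENNReal.ofReal ε < distSetR {x} Ωᶜ}

/-- The rescaled mollifier `φ_ε(p) = ε⁻⁴ φ(δ_{1/ε} p)`. -/
def moll (φ : H3 → ℝ) (ε : ℝ) (p : H3) : ℝ := (1 / ε ^ 4) * φ (Hdil ε⁻¹ p)

/-- `φ` is a mollifier: smooth, compactly supported in `B(0,1)`, nonnegative, unit mass. -/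
def IsMollifier (φ : H3 → ℝ) : Prop :=
  ContDiff ℝ (⊤ : ℕ∞) φ ∧ HasCompactSupport φ ∧ (∀ p, 0 ≤ φ p) ∧
    tsupport φ ⊆ Hball 0 1 ∧ (∫ p : H3, φ p) = 1

/-- Local convolution `(φ_ε ∗ u)(x) = ∫_Ω φ_ε(x·y⁻¹) u(y) dy`. -/
def lconv (φ : H3 → ℝ) (Ω : Set H3) (ε : ℝ) (u : H3 → ℝ) (x : H3) : ℝ :=
  ∫ y in Ω, moll φ ε (Hmul x (Hinv y)) * u y

/-- The horizontal derivative `Xu(p) = ∂₁u(p) − (p₂/2)∂₃u(p)`. -/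
def Xd (u : H3 → ℝ) (p : H3) : ℝ :=
  fderiv ℝ u p (1, 0, 0) - p.2.1 / 2 * fderiv ℝ u p (0, 0, 1)

/-- The horizontal derivative `Yu(p) = ∂₂u(p) + (p₁/2)∂₃u(p)`. -/
def Yd (u : H3 → ℝ) (p : H3) : ℝ :=
  fderiv ℝ u p (0, 1, 0) + p.1 / 2 * fderiv ℝ u p (0, 0, 1)

/-- The horizontal gradient `∇_ℍ u(p) = (Xu(p), Yu(p))`. -/
def gradH (u : H3 → ℝ) (p : H3) : ℝ × ℝ := (Xd u p, Yd u p)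

/-- Left translation acting on functions: `τ_y u(x) = u(y⁻¹·x)`. -/
def tauF (y : H3) (u : H3 → ℝ) (x : H3) : ℝ := u (Hmul (Hinv y) x)

/-- Left translation acting on sets: `τ_y A = y·A`. -/
def tauS (y : H3) (A : Set H3) : Set H3 := Hmul y '' A

/-- Euclidean norm on `ℝ²`. -/
def norm2 (v : ℝ × ℝ) : ℝ := Real.sqrt (v.1 ^ 2 + v.2 ^ 2)

/-- Jensen's inequality for lower semicontinuous convex `F : X → [0,∞]`
on a Banach space and a probability measure. -/
theorem jensen_lsc_convex {X : Type*} [NormedAddCommGroup X] [NormedSpace ℝ X]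
    [CompleteSpace X] {E : Type*} [MeasurableSpace E]
    (μ : Measure E) [IsProbabilityMeasure μ]
    (F : X → ℝ≥0∞) (hlsc : LowerSemicontinuous F)
    (hconv : ∀ a b : X, ∀ θ : ℝ, θ ∈ Set.Icc (0 : ℝ) 1 →
      F (θ • a + (1 - θ) • b) ≤ ENNReal.ofReal θ * F a + ENNReal.ofReal (1 - θ) * F b)
    (u : E → X) (hu : Integrable u μ) :
    F (∫ s, u s ∂μ) ≤ ∫⁻ s, F (u s) ∂μ := by
  
  by_contra h
  push_neg at h
  set x₀ := ∫ s, u s ∂μ with hx₀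
  obtain ⟨c, hc1, hc2⟩ := exists_between h
  have hcne : c ≠ ⊤ := hc2.ne_top
  set r := c.toReal with hrdef
  have hr0 : (0:ℝ) ≤ r := ENNReal.toReal_nonneg
  have hrc : ENNReal.ofReal r = c := ENNReal.ofReal_toReal hcne
  -- epigraph
  set C : Set (X × ℝ) := {p | 0 ≤ p.2 ∧ F p.1 ≤ ENNReal.ofReal p.2} with hCdef
  have hCconv : Convex ℝ C := by
    rintro ⟨a, ta⟩ ⟨ha0, haF⟩ ⟨b, tb⟩ ⟨hb0, hbF⟩ θ η hθ hη hθη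
    have hη' : η = 1 - θ := by linarith
    subst hη'
    constructor
    · have : (0:ℝ) ≤ θ * ta + (1 - θ) * tb := by positivity
      simpa using this
    · have hθ1 : θ ∈ Set.Icc (0:ℝ) 1 := ⟨hθ, by linarith⟩
      have hsum : θ • (a, ta) + (1-θ) • (b, tb)
          = (θ • a + (1-θ) • b, θ * ta + (1-θ) * tb) := by
        simp [Prod.ext_iff, smul_eq_mul]
      calc F (θ • (a, ta) + (1-θ) • (b, tb)).1 = F (θ • a + (1-θ) • b) := by rw [hsum]
        _ ≤ ENNReal.ofReal θ * F a + ENNReal.ofReal (1-θ) * F b := hconv a b θ hθ1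
        _ ≤ ENNReal.ofReal θ * ENNReal.ofReal ta + ENNReal.ofReal (1-θ) * ENNReal.ofReal tb := by
            gcongr
        _ = ENNReal.ofReal (θ * ta + (1-θ) * tb) := by
            rw [← ENNReal.ofReal_mul hθ, ← ENNReal.ofReal_mul hη,
              ENNReal.ofReal_add (by positivity) (by positivity)]
        _ = ENNReal.ofReal (θ • (a, ta) + (1-θ) • (b, tb)).2 := by rw [hsum]
  have hCclosed : IsClosed C := by
    have h1 : IsClosed {p : X × ℝ | 0 ≤ p.2} :=
      isClosed_le continuous_const continuous_snd
    have h2 : IsClosed {p : X × ℝ | F p.1 ≤ ENNReal.ofReal p.2} := by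
      rw [← isOpen_compl_iff]
      have : {p : X × ℝ | F p.1 ≤ ENNReal.ofReal p.2}ᶜ =
          ⋃ d : ℝ≥0∞, ((F ⁻¹' Set.Ioi d) ×ˢ ((fun t => ENNReal.ofReal t) ⁻¹' Set.Iio d)) := by
        ext ⟨x, t⟩
        simp only [Set.mem_compl_iff, Set.mem_setOf_eq, not_le, Set.mem_iUnion,
          Set.mem_prod, Set.mem_preimage, Set.mem_Ioi, Set.mem_Iio]
        constructor
        · intro hlt
          obtain ⟨d, hd1, hd2⟩ := exists_between hlt
          exact ⟨d, hd2, hd1⟩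
        · rintro ⟨d, hd1, hd2⟩; exact hd2.trans hd1
      rw [this]
      exact isOpen_iUnion fun d =>
        (hlsc.isOpen_preimage d).prod (isOpen_Iio.preimage ENNReal.continuous_ofReal)
    have : C = {p : X × ℝ | 0 ≤ p.2} ∩ {p : X × ℝ | F p.1 ≤ ENNReal.ofReal p.2} := rfl
    rw [this]; exact h1.inter h2
  have hxC : (x₀, r) ∉ C := by
    rintro ⟨-, hF⟩
    rw [hrc] at hF
    exact absurd hc2 (not_lt.2 hF)
  obtain ⟨f, κ, hfx, hsep⟩ := geometric_hahn_banach_point_closed hCconv hCclosed hxC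
  set g : X →L[ℝ] ℝ := f.comp (ContinuousLinearMap.inl ℝ X ℝ) with hg
  set β : ℝ := f (0, 1) with hβ
  have hfsplit : ∀ (x : X) (t : ℝ), f (x, t) = g x + t * β := by
    intro x t
    have hxt : (x, t) = (x, (0:ℝ)) + t • ((0:X), (1:ℝ)) := by simp [Prod.ext_iff]
    rw [hxt, map_add, f.map_smul]
    simp [hg, smul_eq_mul, hβ]
  have hsep' : ∀ y : X, ∀ t : ℝ, 0 ≤ t → F y ≤ ENNReal.ofReal t → κ < g y + t * β := by
    intro y t ht hFt
    have := hsep (y, t) ⟨ht, hFt⟩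
    rwa [hfsplit] at this
  have hfx' : g x₀ + r * β < κ := by rwa [hfsplit] at hfx
  -- minorant property: for F y finite, κ < g y + (F y).toReal * β
  have hmin : ∀ y : X, F y ≠ ⊤ → κ < g y + (F y).toReal * β := by
    intro y hy
    exact hsep' y (F y).toReal ENNReal.toReal_nonneg (by rw [ENNReal.ofReal_toReal hy])
  -- a point where F ∘ u is finite
  have hne : ∃ s : E, F (u s) ≠ ⊤ := by
    by_contra hall
    push_neg at hall
    have htop : ∫⁻ s, F (u s) ∂μ = ⊤ := by
      have heq : ∫⁻ s, F (u s) ∂μ = ∫⁻ _, (⊤:ℝ≥0∞) ∂μ := by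
        congr 1; ext s; exact hall s
      rw [heq, lintegral_const]; simp
    rw [htop] at hc1
    exact absurd hc1 (by simp)
  obtain ⟨s₁, hs₁⟩ := hne
  -- β ≥ 0
  have hβ0 : 0 ≤ β := by
    by_contra hβneg
    push_neg at hβneg
    set t₁ := (F (u s₁)).toReal with ht₁
    have ht₁0 : 0 ≤ t₁ := ENNReal.toReal_nonneg
    set T := max t₁ ((κ - g (u s₁) - 1) / β) with hT
    have hTt : t₁ ≤ T := le_max_left _ _
    have hT0 : 0 ≤ T := le_trans ht₁0 hTt
    have hTF : F (u s₁) ≤ ENNReal.ofReal T := by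
      rw [← ENNReal.ofReal_toReal hs₁]
      exact ENNReal.ofReal_le_ofReal hTt
    have := hsep' (u s₁) T hT0 hTF
    have hTb : T * β ≤ κ - g (u s₁) - 1 := by
      have : (κ - g (u s₁) - 1) / β ≤ T := le_max_right _ _
      calc T * β ≤ ((κ - g (u s₁) - 1) / β) * β := by
            exact mul_le_mul_of_nonpos_right this (le_of_lt hβneg)
        _ = κ - g (u s₁) - 1 := div_mul_cancel₀ _ (ne_of_lt hβneg)
    linarith
  -- measurability of F ∘ u
  letI : MeasurableSpace X := borel X
  haveI : BorelSpace X := ⟨rfl⟩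
  have hFm : AEMeasurable (fun s => F (u s)) μ := by
    obtain ⟨v, hv, huv⟩ := hu.aestronglyMeasurable
    exact ⟨fun s => F (v s), hlsc.measurable.comp hv.measurable,
      huv.mono fun s hs => by dsimp only; rw [hs]⟩
  rcases eq_or_lt_of_le hβ0 with hβeq | hβpos
  · -- β = 0 : κ < g y for all y with F y finite
    have hae : ∀ᵐ s ∂μ, F (u s) < ⊤ :=
      ae_lt_top' hFm (hc1.trans (lt_top_iff_ne_top.2 hcne)).ne
    have haeκ : ∀ᵐ s ∂μ, κ ≤ g (u s) := by
      filter_upwards [hae] with s hs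
      have := hmin (u s) hs.ne
      rw [← hβeq] at this
      linarith
    have hgint : Integrable (fun s => g (u s)) μ := g.integrable_comp hu
    have hκle : κ ≤ ∫ s, g (u s) ∂μ := by
      have := integral_mono_ae (integrable_const κ) hgint haeκ
      simpa using this
    have hgx : ∫ s, g (u s) ∂μ = g x₀ := (g.integral_comp_comm hu)
    rw [hgx] at hκle
    rw [← hβeq] at hfx'
    linarith
  · -- β > 0 : the affine minorant A y = (κ - g y)/β
    have hA : ∀ y : X, ENNReal.ofReal ((κ - g y) / β) ≤ F y := by
      intro y
      by_cases hy : F y = ⊤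
      · rw [hy]; exact le_top
      · have h1 := hmin y hy
        have h2 : (κ - g y) / β < (F y).toReal := by
          rw [div_lt_iff₀ hβpos]; linarith
        calc ENNReal.ofReal ((κ - g y) / β) ≤ ENNReal.ofReal (F y).toReal :=
              ENNReal.ofReal_le_ofReal h2.le
          _ = F y := ENNReal.ofReal_toReal hy
    set A : E → ℝ := fun s => (κ - g (u s)) / β with hAdef
    have hAint : Integrable A μ := by
      apply Integrable.div_const
      exact (integrable_const κ).sub (g.integrable_comp hu)
    have hAI : ∫ s, A s ∂μ = (κ - g x₀) / β := by
      rw [hAdef]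
      rw [integral_div]
      congr 1
      rw [integral_sub (integrable_const κ) (g.integrable_comp hu),
        g.integral_comp_comm hu, integral_const]
      simp [hx₀]
    -- pass to positive parts
    set Ap : E → ℝ := fun s => max (A s) 0 with hApdef
    have hApint : Integrable Ap μ := hAint.pos_part
    have hApnn : 0 ≤ᵐ[μ] Ap := Filter.Eventually.of_forall fun s => le_max_right _ _
    have h3 : ENNReal.ofReal ((κ - g x₀) / β) ≤ ENNReal.ofReal (∫ s, Ap s ∂μ) := by
      apply ENNReal.ofReal_le_ofReal
      rw [← hAI]
      exact integral_mono hAint hApint fun s => le_max_left _ _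
    have h4 : ENNReal.ofReal (∫ s, Ap s ∂μ) = ∫⁻ s, ENNReal.ofReal (Ap s) ∂μ :=
      ofReal_integral_eq_lintegral_ofReal hApint hApnn
    have h5 : ∫⁻ s, ENNReal.ofReal (Ap s) ∂μ ≤ ∫⁻ s, F (u s) ∂μ := by
      apply lintegral_mono
      intro s
      dsimp only
      have : ENNReal.ofReal (Ap s) = ENNReal.ofReal (A s) := by
        rcases le_total (A s) 0 with hle | hle
        · simp [hApdef, max_eq_right hle, ENNReal.ofReal_of_nonpos hle]
        · simp [hApdef, max_eq_left hle]
      rw [this]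
      exact hA (u s)
    -- the other side
    have hlow : c < ENNReal.ofReal ((κ - g x₀) / β) := by
      rw [← hrc]
      apply ENNReal.ofReal_lt_ofReal_iff_of_nonneg hr0 |>.2
      rw [lt_div_iff₀ hβpos]
      linarith
    have : c < c := lt_of_lt_of_le (lt_of_lt_of_le hlow (h3.trans (h4.le.trans h5))) hc1.le
    exact absurd this (lt_irrefl c)
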